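/- There exist constants c₁,c₂>0 (depending only on the subordinator S) such that for all t>0 and all s>0, c₁ exp(−c₂ t(H∘σ)(t,s)) ≤ P(S_t ≤ s) ≤ e · exp(−t(H∘σ)(t,s)). -/

import Mathlib

/-!
Upper bound: Chernoff's inequality `P(S_t ≤ s) ≤ e^{λ s} E e^{-λ S_t}` at `λ = σ(t,s)`, where
`λ s - t φ(λ) = -t H(λ)`.

Lower bound: exponential tilting. Under `e^{-λ x} P(S_t ∈ dx) / E e^{-λ S_t}` the variable `S_t`
has mean `m = t φ'(λ)` and variance `q = -t φ''(λ)`, so by Chebyshev three quarters of the tilted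
mass lies in `[m - d, m + d]` once `d² ≥ 4 q`; if moreover `m + d ≤ s`, then
`P(S_t ≤ s) ≥ (3/4) exp(-t H(λ) - λ d)`. As `λ² (-φ''(λ)) ≤ 2 H(λ)`, taking `d ≈ 2 √q` makes
`λ d ≤ t H(λ) / 2 + O(1)`. Start from `a = σ(t,s)` (or from a small `a` when `σ(t,s) = 0`), where
`t φ'(a) ≤ s`; the intermediate value theorem gives `λ ≥ a` with `m + d = s`, and concavity of `φ`
yields `t H(λ) ≤ t H(a) + λ d`, hence `t H(λ) ≤ 2 t H(a) + O(1)`.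
-/

open MeasureTheory Real Set
open scoped ENNReal

/-- Tail of the Lévy measure: `w(r) = ν((r,∞))`. -/
noncomputable def levyTail (ν : Measure ℝ) (r : ℝ) : ℝ := (ν (Set.Ioi r)).toReal

/-- Laplace exponent `φ(λ) = ∫ (1 - e^{-λ s}) ν(ds)`. -/
noncomputable def laplaceExp (ν : Measure ℝ) (lam : ℝ) : ℝ :=
  ∫ s, (1 - Real.exp (-(lam * s))) ∂ν

/-- Condition (Poly-R₁); (Poly-∞) is the case `R₁ = ⊤`. -/
def PolyCond (ν : Measure ℝ) (R₁ : ℝ≥0∞) (c c' β₁ β₂ : ℝ) : Prop :=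
  ∀ r R : ℝ, 0 < r → r ≤ R → ENNReal.ofReal R < R₁ →
    c * (R / r) ^ β₁ ≤ levyTail ν r / levyTail ν R ∧
      levyTail ν r / levyTail ν R ≤ c' * (R / r) ^ β₂

/-- `ν` is the Lévy measure of a driftless subordinator. -/
structure IsLevyMeasure (ν : Measure ℝ) : Prop where
  supp : ν (Set.Iic 0) = 0
  tail_fin : ∀ r : ℝ, 0 < r → ν (Set.Ioi r) < ⊤
  integ : IntegrableOn (fun s => s) (Set.Ioc (0:ℝ) 1) ν

/-- `μ t` is the law of `S_t` for the driftless subordinator with Lévy measure `ν`. -/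
structure IsSubordinatorLaw (ν : Measure ℝ) (μ : ℝ → Measure ℝ) : Prop where
  levy : IsLevyMeasure ν
  prob : ∀ t : ℝ, 0 < t → IsProbabilityMeasure (μ t)
  nonneg : ∀ t : ℝ, 0 < t → μ t (Set.Iio 0) = 0
  laplace : ∀ t lam : ℝ, 0 < t → 0 ≤ lam →
    (∫ s, Real.exp (-(lam * s)) ∂(μ t)) = Real.exp (-(t * laplaceExp ν lam))

/-- `H(λ) = φ(λ) - λ φ'(λ)`. -/
noncomputable def Hfun (ν : Measure ℝ) (lam : ℝ) : ℝ :=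
  laplaceExp ν lam - lam * deriv (laplaceExp ν) lam

/-- `σ(t,s) = (φ')⁻¹(s/t)` if `s/t < φ'(0+)`, and `σ(t,s) = 0` otherwise. -/
def IsSigmaFun (ν : Measure ℝ) (σ : ℝ → ℝ → ℝ) : Prop :=
  ∀ t s : ℝ, 0 < t → 0 < s →
    ((∃ lam : ℝ, 0 < lam ∧ s / t < deriv (laplaceExp ν) lam) →
      0 < σ t s ∧ deriv (laplaceExp ν) (σ t s) = s / t) ∧
    ((∀ lam : ℝ, 0 < lam → deriv (laplaceExp ν) lam ≤ s / t) → σ t s = 0)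

/-- `φInv` is the inverse of the Laplace exponent `φ` on `(0,∞)`. -/
def IsPhiInv (ν : Measure ℝ) (φInv : ℝ → ℝ) : Prop :=
  ∀ u : ℝ, 0 < u → 0 < φInv u ∧ laplaceExp ν (φInv u) = u

/-- `HInv` is the inverse of `H` on `(0,∞)`. -/
def IsHInv (ν : Measure ℝ) (HInv : ℝ → ℝ) : Prop :=
  ∀ u : ℝ, 0 < u → 0 < HInv u ∧ Hfun ν (HInv u) = u

open Filter Topology

section ExpInequalities

variable {a b l x y : ℝ}

lemma mul_exp_neg_le_one_sub_exp_neg (y : ℝ) : y * exp (-y) ≤ 1 - exp (-y) := by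
  have h := mul_le_mul_of_nonneg_right (add_one_le_exp y) (exp_pos (-y)).le
  rw [← exp_add, add_neg_cancel, exp_zero] at h
  linarith

lemma sq_mul_exp_neg_le (hy : 0 ≤ y) :
    y ^ 2 * exp (-y) ≤ 2 * (1 - exp (-y) - y * exp (-y)) := by
  have h := mul_le_mul_of_nonneg_right (quadratic_le_exp_of_nonneg hy) (exp_pos (-y)).le
  rw [← exp_add, add_neg_cancel, exp_zero] at h
  linarith

lemma exp_neg_mul_sub_exp_neg_mul_le (a b x : ℝ) :
    exp (-(a * x)) - exp (-(b * x)) ≤ (b - a) * (x * exp (-(a * x))) := by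
  have h := mul_le_mul_of_nonneg_left (add_one_le_exp (-((b - a) * x))) (exp_pos (-(a * x))).le
  rw [← exp_add] at h
  ring_nf at h ⊢
  linarith

lemma pow_mul_exp_neg_mul_le (k : ℕ) (hl : 0 < l) (hx : 0 ≤ x) :
    x ^ k * exp (-(l * x)) ≤ k.factorial / l ^ k := by
  have h := mul_le_mul_of_nonneg_right (pow_div_factorial_le_exp (l * x) (by positivity) k)
    (exp_pos (-(l * x))).le
  rw [← exp_add, add_neg_cancel, exp_zero, mul_pow, div_mul_eq_mul_div, mul_assoc,
    div_le_one (by positivity)] at h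
  rw [le_div_iff₀ (by positivity)]
  linarith

lemma exp_neg_mul_le_of_le (hx : 0 ≤ x) (h : a ≤ b) : exp (-(b * x)) ≤ exp (-(a * x)) :=
  exp_le_exp.2 (neg_le_neg (mul_le_mul_of_nonneg_right h hx))

end ExpInequalities

lemma le_setIntegral_Icc_of_integral_sq_sub_mul_le {ρ : Measure ℝ} {f : ℝ → ℝ} {m d c : ℝ}
    (hd : 0 < d) (hf₀ : ∀ x, 0 ≤ f x) (hf : Integrable f ρ)
    (hvar : Integrable (fun x => (x - m) ^ 2 * f x) ρ)
    (hle : ∫ x, (x - m) ^ 2 * f x ∂ρ ≤ c * d ^ 2 * ∫ x, f x ∂ρ) :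
    (1 - c) * ∫ x, f x ∂ρ ≤ ∫ x in Icc (m - d) (m + d), f x ∂ρ := by
  have hfar : ∀ x ∈ (Icc (m - d) (m + d))ᶜ, f x ≤ (x - m) ^ 2 * f x / d ^ 2 := fun x hx => by
    have : d ^ 2 ≤ (x - m) ^ 2 := by
      rw [mem_compl_iff, mem_Icc, not_and_or, not_le, not_le] at hx
      rcases hx with hx | hx <;> nlinarith
    rw [le_div_iff₀ (by positivity)]
    nlinarith [hf₀ x]
  have hchebyshev : ∫ x in (Icc (m - d) (m + d))ᶜ, f x ∂ρ ≤ c * ∫ x, f x ∂ρ :=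
    calc ∫ x in (Icc (m - d) (m + d))ᶜ, f x ∂ρ
        ≤ ∫ x in (Icc (m - d) (m + d))ᶜ, (x - m) ^ 2 * f x / d ^ 2 ∂ρ :=
          setIntegral_mono_on hf.integrableOn (hvar.div_const _).integrableOn
            measurableSet_Icc.compl hfar
      _ ≤ ∫ x, (x - m) ^ 2 * f x / d ^ 2 ∂ρ :=
          setIntegral_le_integral (hvar.div_const _)
            (Eventually.of_forall fun x => by have := hf₀ x; positivity)
      _ = (∫ x, (x - m) ^ 2 * f x ∂ρ) / d ^ 2 := integral_div _ _
      _ ≤ c * ∫ x, f x ∂ρ := by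
          rw [div_le_iff₀ (by positivity)]
          linarith
  linarith [integral_add_compl (measurableSet_Icc (a := m - d) (b := m + d)) hf]

/-- `expMoment ν 1 = φ'` and `expMoment ν 2 = -φ''`; for the law `μ t` of `S_t`,
`expMoment (μ t) k l / expMoment (μ t) 0 l` is the `k`-th moment of `S_t` tilted by `e^{-l S_t}`. -/
noncomputable def expMoment (ρ : Measure ℝ) (k : ℕ) (l : ℝ) : ℝ :=
  ∫ x, x ^ k * exp (-(l * x)) ∂ρ

section ExpMoment

variable {ρ : Measure ℝ} {k : ℕ} {l : ℝ}

lemma expMoment_nonneg (hρ : ∀ᵐ x ∂ρ, 0 ≤ x) (k : ℕ) (l : ℝ) : 0 ≤ expMoment ρ k l :=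
  integral_nonneg_of_ae <| by filter_upwards [hρ] with x hx; positivity

lemma integrable_pow_mul_exp_of_ae_nonneg [IsFiniteMeasure ρ] (hρ : ∀ᵐ x ∂ρ, 0 ≤ x) (k : ℕ)
    (hl : 0 < l) : Integrable (fun x => x ^ k * exp (-(l * x))) ρ := by
  refine (integrable_const ((k.factorial : ℝ) / l ^ k)).mono' (by fun_prop) ?_
  filter_upwards [hρ] with x hx
  rw [Real.norm_of_nonneg (by positivity)]
  exact pow_mul_exp_neg_mul_le k hl hx

lemma hasDerivAt_expMoment (hl : 0 < l) (hρ : ∀ᵐ x ∂ρ, 0 ≤ x)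
    (hk : Integrable (fun x => x ^ k * exp (-(l * x))) ρ)
    (hk₁ : Integrable (fun x => x ^ (k + 1) * exp (-(l / 2 * x))) ρ) :
    HasDerivAt (expMoment ρ k) (-expMoment ρ (k + 1) l) l := by
  have h := hasDerivAt_integral_of_dominated_loc_of_deriv_le (μ := ρ)
    (F := fun u x => x ^ k * exp (-(u * x))) (F' := fun u x => -(x ^ (k + 1) * exp (-(u * x))))
    (Ioi_mem_nhds (half_lt_self hl)) (Eventually.of_forall fun u => by fun_prop) hk
    (by fun_prop) ?_ hk₁ ?_
  · have h₂ := h.2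
    rw [integral_neg] at h₂
    exact h₂
  · filter_upwards [hρ] with x hx u hu
    rw [norm_neg, Real.norm_of_nonneg (by positivity)]
    exact mul_le_mul_of_nonneg_left (exp_neg_mul_le_of_le hx (le_of_lt hu)) (by positivity)
  · refine Eventually.of_forall fun x u _ => ?_
    have hd : HasDerivAt (fun u : ℝ => -(u * x)) (-x) u := (hasDerivAt_mul_const x).neg
    exact (hd.exp.const_mul (x ^ k)).congr_deriv (by ring)

lemma tendsto_expMoment_atTop (hρ : ∀ᵐ x ∂ρ, 0 < x)
    (hint : Integrable (fun x => x ^ k * exp (-(1 * x))) ρ) :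
    Tendsto (expMoment ρ k) atTop (𝓝 0) := by
  have h := tendsto_integral_filter_of_dominated_convergence (μ := ρ)
    (l := atTop) (F := fun u x => x ^ k * exp (-(u * x))) (f := fun _ => 0) _
    (Eventually.of_forall fun u => by fun_prop) ?_ hint ?_
  · rw [integral_zero] at h
    exact h
  · filter_upwards [eventually_ge_atTop 1] with u hu
    filter_upwards [hρ] with x hx
    rw [Real.norm_of_nonneg (by positivity)]
    exact mul_le_mul_of_nonneg_left (exp_neg_mul_le_of_le hx.le hu) (by positivity)
  · filter_upwards [hρ] with x hx
    have h := (tendsto_exp_atBot.comp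
      (tendsto_neg_atTop_atBot.comp (tendsto_id.atTop_mul_const hx))).const_mul (x ^ k)
    simpa only [mul_zero, Function.comp_def, id] using h

end ExpMoment

lemma laplaceExp_zero (ν : Measure ℝ) : laplaceExp ν 0 = 0 := by
  simp [laplaceExp]

lemma Hfun_zero (ν : Measure ℝ) : Hfun ν 0 = 0 := by
  simp [Hfun, laplaceExp_zero]

namespace IsLevyMeasure

variable {ν : Measure ℝ} {a b l : ℝ} {k : ℕ}

lemma ae_pos (hν : IsLevyMeasure ν) : ∀ᵐ x ∂ν, 0 < x := by
  rw [ae_iff]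
  simp only [not_lt]
  exact hν.supp

lemma integrable_of_le (hν : IsLevyMeasure ν) {f : ℝ → ℝ} {C : ℝ}
    (hf : AEStronglyMeasurable f ν) (h₀₁ : ∀ x ∈ Ioc (0 : ℝ) 1, |f x| ≤ C * x)
    (h₁ : ∀ x ∈ Ioi (1 : ℝ), |f x| ≤ C) : Integrable f ν := by
  have hrestrict : ν.restrict (Ioi 0) = ν := Measure.restrict_eq_self_of_ae_mem hν.ae_pos
  rw [← hrestrict, ← Ioc_union_Ioi_eq_Ioi zero_le_one]
  refine IntegrableOn.union ?_ ?_
  · refine (hν.integ.const_mul C).mono' hf.restrict ?_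
    filter_upwards [ae_restrict_mem measurableSet_Ioc] with x hx
    exact h₀₁ x hx
  · refine (integrableOn_const (hν.tail_fin 1 one_pos).ne).mono' hf.restrict ?_
    filter_upwards [ae_restrict_mem measurableSet_Ioi] with x hx
    exact h₁ x hx

lemma integrable_one_sub_exp (hν : IsLevyMeasure ν) (hl : 0 ≤ l) :
    Integrable (fun x => 1 - exp (-(l * x))) ν := by
  have habs : ∀ x, 0 ≤ x → |1 - exp (-(l * x))| = 1 - exp (-(l * x)) := fun x hx =>
    abs_of_nonneg (by linarith [exp_le_one_iff.2 (neg_nonpos.2 (mul_nonneg hl hx))])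
  refine hν.integrable_of_le (C := max 1 l) (by fun_prop) (fun x hx => ?_) (fun x hx => ?_)
  · rw [habs x hx.1.le]
    nlinarith [add_one_le_exp (-(l * x)), le_max_right 1 l, hx.1]
  · rw [habs x (zero_le_one.trans (le_of_lt hx))]
    linarith [exp_pos (-(l * x)), le_max_left 1 l]

lemma integrable_pow_mul_exp (hν : IsLevyMeasure ν) (hk : k ≠ 0) (hl : 0 < l) :
    Integrable (fun x => x ^ k * exp (-(l * x))) ν := by
  set C := max 1 ((k.factorial : ℝ) / l ^ k)
  refine hν.integrable_of_le (C := C) (by fun_prop) (fun x hx => ?_) (fun x hx => ?_)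
  · rw [abs_of_nonneg (by have := hx.1; positivity)]
    calc x ^ k * exp (-(l * x)) ≤ x * 1 :=
          mul_le_mul (pow_le_of_le_one hx.1.le hx.2 hk)
            (exp_le_one_iff.2 (by nlinarith [hx.1])) (exp_pos _).le hx.1.le
      _ ≤ C * x := by nlinarith [le_max_left 1 ((k.factorial : ℝ) / l ^ k), hx.1]
  · have hx₀ : (0 : ℝ) ≤ x := zero_le_one.trans (le_of_lt hx)
    rw [abs_of_nonneg (by positivity)]
    exact (pow_mul_exp_neg_mul_le k hl hx₀).trans (le_max_right _ _)

lemma hasDerivAt_laplaceExp (hν : IsLevyMeasure ν) (hl : 0 < l) :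
    HasDerivAt (laplaceExp ν) (expMoment ν 1 l) l := by
  have h := hasDerivAt_integral_of_dominated_loc_of_deriv_le (μ := ν)
    (F := fun u x => 1 - exp (-(u * x))) (F' := fun u x => x ^ 1 * exp (-(u * x)))
    (Ioi_mem_nhds (half_lt_self hl)) (Eventually.of_forall fun u => by fun_prop)
    (hν.integrable_one_sub_exp hl.le) (by fun_prop) ?_
    (hν.integrable_pow_mul_exp one_ne_zero (half_pos hl)) ?_
  · exact h.2
  · filter_upwards [hν.ae_pos] with x hx u hu
    rw [Real.norm_of_nonneg (by positivity)]
    exact mul_le_mul_of_nonneg_left (exp_neg_mul_le_of_le hx.le (le_of_lt hu)) (by positivity)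
  · refine Eventually.of_forall fun x u _ => ?_
    have hd : HasDerivAt (fun u : ℝ => -(u * x)) (-x) u := (hasDerivAt_mul_const x).neg
    exact (hd.exp.const_sub 1).congr_deriv (by ring)

lemma hasDerivAt_expMoment (hν : IsLevyMeasure ν) (hk : k ≠ 0) (hl : 0 < l) :
    HasDerivAt (expMoment ν k) (-expMoment ν (k + 1) l) l :=
  _root_.hasDerivAt_expMoment hl (hν.ae_pos.mono fun _ hx => hx.le)
    (hν.integrable_pow_mul_exp hk hl) (hν.integrable_pow_mul_exp k.succ_ne_zero (half_pos hl))

lemma tendsto_expMoment_atTop (hν : IsLevyMeasure ν) (hk : k ≠ 0) :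
    Tendsto (expMoment ν k) atTop (𝓝 0) :=
  _root_.tendsto_expMoment_atTop hν.ae_pos (hν.integrable_pow_mul_exp hk one_pos)

lemma Hfun_eq (hν : IsLevyMeasure ν) (hl : 0 < l) :
    Hfun ν l = laplaceExp ν l - l * expMoment ν 1 l := by
  rw [Hfun, (hν.hasDerivAt_laplaceExp hl).deriv]

lemma mul_expMoment_one_le (hν : IsLevyMeasure ν) (hl : 0 < l) :
    l * expMoment ν 1 l ≤ laplaceExp ν l := by
  rw [expMoment, ← integral_const_mul]
  refine integral_mono_ae ((hν.integrable_pow_mul_exp one_ne_zero hl).const_mul l)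
    (hν.integrable_one_sub_exp hl.le) (Eventually.of_forall fun x => ?_)
  simpa only [pow_one, ← mul_assoc] using mul_exp_neg_le_one_sub_exp_neg (l * x)

lemma Hfun_nonneg (hν : IsLevyMeasure ν) (hl : 0 < l) : 0 ≤ Hfun ν l := by
  rw [hν.Hfun_eq hl]
  linarith [hν.mul_expMoment_one_le hl]

lemma Hfun_le_laplaceExp (hν : IsLevyMeasure ν) (hl : 0 < l) : Hfun ν l ≤ laplaceExp ν l := by
  rw [hν.Hfun_eq hl]
  linarith [mul_nonneg hl.le (expMoment_nonneg (hν.ae_pos.mono fun _ hx => hx.le) 1 l)]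

lemma sq_mul_expMoment_two_le (hν : IsLevyMeasure ν) (hl : 0 < l) :
    l ^ 2 * expMoment ν 2 l ≤ 2 * Hfun ν l := by
  have hint₁ := hν.integrable_pow_mul_exp one_ne_zero hl
  have hH : Hfun ν l = ∫ x, (1 - exp (-(l * x)) - l * (x ^ 1 * exp (-(l * x)))) ∂ν := by
    rw [hν.Hfun_eq hl, integral_sub (hν.integrable_one_sub_exp hl.le) (hint₁.const_mul l),
      integral_const_mul, laplaceExp, expMoment]
  rw [hH, expMoment, ← integral_const_mul, ← integral_const_mul]
  refine integral_mono_ae ((hν.integrable_pow_mul_exp two_ne_zero hl).const_mul _)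
    (((hν.integrable_one_sub_exp hl.le).sub (hint₁.const_mul l)).const_mul 2) ?_
  filter_upwards [hν.ae_pos] with x hx
  have h := sq_mul_exp_neg_le (mul_nonneg hl.le hx.le)
  ring_nf at h ⊢
  linarith

lemma laplaceExp_sub_le (hν : IsLevyMeasure ν) (ha : 0 < a) (hb : 0 ≤ b) :
    laplaceExp ν b - laplaceExp ν a ≤ (b - a) * expMoment ν 1 a := by
  rw [laplaceExp, laplaceExp, ← integral_sub (hν.integrable_one_sub_exp hb)
    (hν.integrable_one_sub_exp ha.le), expMoment, ← integral_const_mul]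
  refine integral_mono_ae ((hν.integrable_one_sub_exp hb).sub (hν.integrable_one_sub_exp ha.le))
    ((hν.integrable_pow_mul_exp one_ne_zero ha).const_mul _) (Eventually.of_forall fun x => ?_)
  have h := exp_neg_mul_sub_exp_neg_mul_le a b x
  simp only [pow_one]
  linarith

lemma Hfun_le_add (hν : IsLevyMeasure ν) (ha : 0 < a) (hb : 0 < b) :
    Hfun ν b ≤ Hfun ν a + b * (expMoment ν 1 a - expMoment ν 1 b) := by
  rw [hν.Hfun_eq ha, hν.Hfun_eq hb]
  linarith [hν.laplaceExp_sub_le ha hb.le]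

lemma tendsto_laplaceExp_zero (hν : IsLevyMeasure ν) :
    Tendsto (laplaceExp ν) (𝓝[>] 0) (𝓝 0) := by
  have h := tendsto_integral_filter_of_dominated_convergence (μ := ν) (l := 𝓝[>] (0 : ℝ))
    (F := fun u x => 1 - exp (-(u * x))) (f := fun _ => 0) _
    (Eventually.of_forall fun u => by fun_prop) ?_ (hν.integrable_one_sub_exp zero_le_one) ?_
  · rw [integral_zero] at h
    exact h
  · filter_upwards [Ioc_mem_nhdsGT zero_lt_one] with u hu
    filter_upwards [hν.ae_pos] with x hx
    rw [Real.norm_of_nonneg (by linarith [exp_le_one_iff.2 (neg_nonpos.2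
      (mul_nonneg hu.1.le hx.le))])]
    linarith [exp_neg_mul_le_of_le hx.le hu.2]
  · refine Eventually.of_forall fun x => ?_
    have h : Continuous fun u : ℝ => 1 - exp (-(u * x)) := by fun_prop
    simpa using (h.tendsto 0).mono_left nhdsWithin_le_nhds

end IsLevyMeasure

namespace IsSubordinatorLaw

variable {ν : Measure ℝ} {μ : ℝ → Measure ℝ} {t l s d : ℝ}

lemma ae_nonneg (hμ : IsSubordinatorLaw ν μ) (ht : 0 < t) : ∀ᵐ x ∂μ t, 0 ≤ x := by
  rw [ae_iff]
  simp only [not_le]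
  exact hμ.nonneg t ht

lemma integrable_pow_mul_exp (hμ : IsSubordinatorLaw ν μ) (ht : 0 < t) (k : ℕ) (hl : 0 < l) :
    Integrable (fun x => x ^ k * exp (-(l * x))) (μ t) :=
  have := hμ.prob t ht
  integrable_pow_mul_exp_of_ae_nonneg (hμ.ae_nonneg ht) k hl

lemma hasDerivAt_expMoment (hμ : IsSubordinatorLaw ν μ) (ht : 0 < t) (k : ℕ) (hl : 0 < l) :
    HasDerivAt (expMoment (μ t) k) (-expMoment (μ t) (k + 1) l) l :=
  _root_.hasDerivAt_expMoment hl (hμ.ae_nonneg ht) (hμ.integrable_pow_mul_exp ht k hl)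
    (hμ.integrable_pow_mul_exp ht (k + 1) (half_pos hl))

lemma expMoment_zero (hμ : IsSubordinatorLaw ν μ) (ht : 0 < t) (hl : 0 ≤ l) :
    expMoment (μ t) 0 l = exp (-(t * laplaceExp ν l)) := by
  simpa only [expMoment, pow_zero, one_mul] using hμ.laplace t l ht hl

lemma expMoment_one (hμ : IsSubordinatorLaw ν μ) (ht : 0 < t) (hl : 0 < l) :
    expMoment (μ t) 1 l = t * expMoment ν 1 l * exp (-(t * laplaceExp ν l)) := by
  have hlaplace : HasDerivAt (fun u => exp (-(t * laplaceExp ν u)))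
      (exp (-(t * laplaceExp ν l)) * -(t * expMoment ν 1 l)) l :=
    ((hμ.levy.hasDerivAt_laplaceExp hl).const_mul t).neg.exp
  have heq : expMoment (μ t) 0 =ᶠ[𝓝 l] fun u => exp (-(t * laplaceExp ν u)) := by
    filter_upwards [Ioi_mem_nhds hl] with u hu
    exact hμ.expMoment_zero ht (le_of_lt hu)
  linear_combination -((hμ.hasDerivAt_expMoment ht 0 hl).unique
    (hlaplace.congr_of_eventuallyEq heq))

lemma expMoment_two (hμ : IsSubordinatorLaw ν μ) (ht : 0 < t) (hl : 0 < l) :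
    expMoment (μ t) 2 l
      = (t * expMoment ν 2 l + (t * expMoment ν 1 l) ^ 2) * exp (-(t * laplaceExp ν l)) := by
  have hrhs : HasDerivAt (fun u => t * expMoment ν 1 u * exp (-(t * laplaceExp ν u)))
      (t * -expMoment ν 2 l * exp (-(t * laplaceExp ν l))
        + t * expMoment ν 1 l * (exp (-(t * laplaceExp ν l)) * -(t * expMoment ν 1 l))) l :=
    ((hμ.levy.hasDerivAt_expMoment one_ne_zero hl).const_mul t).mul
      ((hμ.levy.hasDerivAt_laplaceExp hl).const_mul t).neg.exp
  have heq : expMoment (μ t) 1 =ᶠ[𝓝 l]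
      fun u => t * expMoment ν 1 u * exp (-(t * laplaceExp ν u)) := by
    filter_upwards [Ioi_mem_nhds hl] with u hu
    exact hμ.expMoment_one ht hu
  linear_combination -((hμ.hasDerivAt_expMoment ht 1 hl).unique
    (hrhs.congr_of_eventuallyEq heq))

lemma integrable_sq_sub_mul_exp (hμ : IsSubordinatorLaw ν μ) (ht : 0 < t) (hl : 0 < l)
    (m : ℝ) : Integrable (fun x => (x - m) ^ 2 * exp (-(l * x))) (μ t) := by
  refine (((hμ.integrable_pow_mul_exp ht 2 hl).sub
    ((hμ.integrable_pow_mul_exp ht 1 hl).const_mul (2 * m))).add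
    ((hμ.integrable_pow_mul_exp ht 0 hl).const_mul (m ^ 2))).congr
    (Eventually.of_forall fun x => ?_)
  simp only [Pi.add_apply, Pi.sub_apply]
  ring

lemma integral_sq_sub_mul_exp (hμ : IsSubordinatorLaw ν μ) (ht : 0 < t) (hl : 0 < l) :
    ∫ x, (x - t * expMoment ν 1 l) ^ 2 * exp (-(l * x)) ∂μ t
      = t * expMoment ν 2 l * exp (-(t * laplaceExp ν l)) := by
  set m := t * expMoment ν 1 l
  have h₀ := hμ.integrable_pow_mul_exp ht 0 hl
  have h₁ := hμ.integrable_pow_mul_exp ht 1 hl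
  have h₂ := hμ.integrable_pow_mul_exp ht 2 hl
  have hexpand : (fun x => (x - m) ^ 2 * exp (-(l * x))) = fun x =>
      x ^ 2 * exp (-(l * x)) - 2 * m * (x ^ 1 * exp (-(l * x)))
        + m ^ 2 * (x ^ 0 * exp (-(l * x))) := by
    funext x; ring
  have h₂₁ : Integrable (fun x => x ^ 2 * exp (-(l * x)) - 2 * m * (x ^ 1 * exp (-(l * x))))
      (μ t) := h₂.sub (h₁.const_mul _)
  rw [hexpand, integral_add h₂₁ (h₀.const_mul _), integral_sub h₂ (h₁.const_mul _),
    integral_const_mul, integral_const_mul, ← expMoment, ← expMoment, ← expMoment,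
    hμ.expMoment_zero ht hl.le, hμ.expMoment_one ht hl, hμ.expMoment_two ht hl]
  ring

lemma measure_Iic_le (hμ : IsSubordinatorLaw ν μ) (ht : 0 < t) (hl : 0 ≤ l) (s : ℝ) :
    (μ t (Iic s)).toReal ≤ exp (l * s - t * laplaceExp ν l) := by
  have := hμ.prob t ht
  have hint : Integrable (fun x => exp (-l * id x)) (μ t) := by
    refine (integrable_const 1).mono' (by fun_prop) ?_
    filter_upwards [hμ.ae_nonneg ht] with x hx
    rw [Real.norm_of_nonneg (exp_pos _).le, exp_le_one_iff, neg_mul, neg_nonpos]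
    exact mul_nonneg hl hx
  have h := ProbabilityTheory.measure_le_le_exp_mul_mgf s (neg_nonpos.2 hl) hint
  simp only [ProbabilityTheory.mgf, id, neg_mul, neg_neg] at h
  rwa [hμ.laplace t l ht hl, ← exp_add, ← sub_eq_add_neg] at h

lemma measure_Iic_ge (hμ : IsSubordinatorLaw ν μ) (ht : 0 < t) (hl : 0 < l) (hd : 0 < d)
    (hq : 4 * (t * expMoment ν 2 l) ≤ d ^ 2) (hs : t * expMoment ν 1 l + d ≤ s) :
    3 / 4 * exp (-(t * Hfun ν l) - l * d) ≤ (μ t (Iic s)).toReal := by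
  have := hμ.prob t ht
  set m := t * expMoment ν 1 l
  set E := exp (-(t * laplaceExp ν l))
  have hE : ∫ x, exp (-(l * x)) ∂μ t = E := hμ.laplace t l ht hl.le
  have hf : Integrable (fun x => exp (-(l * x))) (μ t) := by
    simpa only [pow_zero, one_mul] using hμ.integrable_pow_mul_exp ht 0 hl
  have hvar : ∫ x, (x - m) ^ 2 * exp (-(l * x)) ∂μ t
      ≤ 1 / 4 * d ^ 2 * ∫ x, exp (-(l * x)) ∂μ t := by
    rw [hμ.integral_sq_sub_mul_exp ht hl, hE]
    nlinarith [exp_pos (-(t * laplaceExp ν l))]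
  have hwindow : 3 / 4 * E ≤ (μ t (Iic s)).toReal * exp (-(l * (m - d))) :=
    calc 3 / 4 * E = (1 - 1 / 4) * ∫ x, exp (-(l * x)) ∂μ t := by
          rw [hE]; norm_num
      _ ≤ ∫ x in Icc (m - d) (m + d), exp (-(l * x)) ∂μ t :=
          le_setIntegral_Icc_of_integral_sq_sub_mul_le hd (fun x => (exp_pos _).le) hf
            (hμ.integrable_sq_sub_mul_exp ht hl m) hvar
      _ ≤ ∫ x in Icc (m - d) (m + d), exp (-(l * (m - d))) ∂μ t :=
          setIntegral_mono_on hf.integrableOn integrableOn_const measurableSet_Icc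
            fun x hx => exp_le_exp.2 (neg_le_neg (mul_le_mul_of_nonneg_left hx.1 hl.le))
      _ = (μ t).real (Icc (m - d) (m + d)) * exp (-(l * (m - d))) := by
          rw [setIntegral_const, smul_eq_mul]
      _ ≤ (μ t (Iic s)).toReal * exp (-(l * (m - d))) := by
          gcongr
          exact measureReal_mono (fun x hx => hx.2.trans hs) (measure_ne_top _ _)
  calc 3 / 4 * exp (-(t * Hfun ν l) - l * d) = 3 / 4 * E * exp (l * (m - d)) := by
        rw [hμ.levy.Hfun_eq hl, mul_assoc, ← exp_add]
        congr 2
        ring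
    _ ≤ (μ t (Iic s)).toReal * exp (-(l * (m - d))) * exp (l * (m - d)) := by gcongr
    _ = (μ t (Iic s)).toReal := by rw [mul_assoc, ← exp_add, neg_add_cancel, exp_zero, mul_one]

end IsSubordinatorLaw

/-- Half-width of the Chebyshev window. The `l⁻¹` keeps it positive when `expMoment ν 2 l = 0`
(for `ν = 0`), at the price of `l * l⁻¹ = 1` in the exponent. -/
noncomputable def tiltWidth (ν : Measure ℝ) (t l : ℝ) : ℝ := 2 * √(t * expMoment ν 2 l) + l⁻¹

section TiltWidth

variable {ν : Measure ℝ} {t l a s : ℝ}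

lemma tiltWidth_pos (hl : 0 < l) : 0 < tiltWidth ν t l := by
  unfold tiltWidth
  positivity

lemma four_mul_le_tiltWidth_sq (hν : IsLevyMeasure ν) (ht : 0 ≤ t) (hl : 0 < l) :
    4 * (t * expMoment ν 2 l) ≤ tiltWidth ν t l ^ 2 := by
  have hq : 0 ≤ t * expMoment ν 2 l :=
    mul_nonneg ht (expMoment_nonneg (hν.ae_pos.mono fun _ hx => hx.le) 2 l)
  have := sq_sqrt hq
  unfold tiltWidth
  nlinarith [sqrt_nonneg (t * expMoment ν 2 l), inv_pos.2 hl]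

lemma mul_tiltWidth_le (hν : IsLevyMeasure ν) (ht : 0 ≤ t) (hl : 0 < l) :
    l * tiltWidth ν t l ≤ t * Hfun ν l / 2 + 5 := by
  have hq : 0 ≤ t * expMoment ν 2 l :=
    mul_nonneg ht (expMoment_nonneg (hν.ae_pos.mono fun _ hx => hx.le) 2 l)
  have hr : (l * √(t * expMoment ν 2 l)) ^ 2 ≤ 2 * (t * Hfun ν l) := by
    rw [mul_pow, sq_sqrt hq]
    nlinarith [hν.sq_mul_expMoment_two_le hl]
  unfold tiltWidth
  rw [mul_add, mul_inv_cancel₀ hl.ne']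
  nlinarith [sq_nonneg (l * √(t * expMoment ν 2 l) - 4)]

lemma continuousOn_tiltWidth (hν : IsLevyMeasure ν) : ContinuousOn (tiltWidth ν t) (Ioi 0) :=
  fun _ hl => ((continuousAt_const.mul
    ((hν.hasDerivAt_expMoment two_ne_zero hl).continuousAt.const_mul t).sqrt).add
    (continuousAt_inv₀ (ne_of_gt hl))).continuousWithinAt

lemma tendsto_tiltWidth_atTop (hν : IsLevyMeasure ν) : Tendsto (tiltWidth ν t) atTop (𝓝 0) := by
  have h := ((((hν.tendsto_expMoment_atTop two_ne_zero).const_mul t).sqrt).const_mul 2).add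
    tendsto_inv_atTop_zero
  rw [mul_zero, sqrt_zero, mul_zero, zero_add] at h
  exact h

lemma IsLevyMeasure.exists_tiltWidth_le (hν : IsLevyMeasure ν) (ht : 0 < t) (hs : 0 < s)
    (ha : 0 < a) (has : t * expMoment ν 1 a ≤ s) :
    ∃ b, 0 < b ∧ t * expMoment ν 1 b + tiltWidth ν t b ≤ s ∧
      t * Hfun ν b ≤ 2 * (t * Hfun ν a) + 10 := by
  set g := fun l => t * expMoment ν 1 l + tiltWidth ν t l
  by_cases hga : g a ≤ s
  · exact ⟨a, ha, hga, by linarith [mul_nonneg ht.le (hν.Hfun_nonneg ha)]⟩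
  have hg_cont : ContinuousOn g (Ioi 0) := fun l hl =>
    ((hν.hasDerivAt_expMoment one_ne_zero hl).continuousAt.const_mul t).continuousWithinAt.add
      (continuousOn_tiltWidth hν l hl)
  have hg_lim : Tendsto g atTop (𝓝 0) := by
    have h := ((hν.tendsto_expMoment_atTop one_ne_zero).const_mul t).add
      (tendsto_tiltWidth_atTop (t := t) hν)
    rw [mul_zero, zero_add] at h
    exact h
  obtain ⟨Λ, hgΛ, haΛ⟩ := ((hg_lim.eventually (ge_mem_nhds hs)).and (eventually_ge_atTop a)).exists
  obtain ⟨b, ⟨hab, -⟩, hgb⟩ := intermediate_value_Icc' haΛ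
    (hg_cont.mono fun x hx => ha.trans_le hx.1) ⟨hgΛ, le_of_not_ge hga⟩
  have hb : 0 < b := ha.trans_le hab
  have hHb : t * Hfun ν b ≤ t * Hfun ν a + b * tiltWidth ν t b :=
    calc t * Hfun ν b ≤ t * (Hfun ν a + b * (expMoment ν 1 a - expMoment ν 1 b)) :=
          mul_le_mul_of_nonneg_left (hν.Hfun_le_add ha hb) ht.le
      _ = t * Hfun ν a + b * (t * expMoment ν 1 a - t * expMoment ν 1 b) := by ring
      _ ≤ t * Hfun ν a + b * (s - t * expMoment ν 1 b) := by gcongr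
      _ = t * Hfun ν a + b * tiltWidth ν t b := by rw [← hgb]; ring
  exact ⟨b, hb, hgb.le, by linarith [mul_tiltWidth_le hν ht.le hb]⟩

end TiltWidth

namespace IsSubordinatorLaw

variable {ν : Measure ℝ} {μ : ℝ → Measure ℝ} {t l a s : ℝ}

lemma measure_Iic_ge_of_tiltWidth_le (hμ : IsSubordinatorLaw ν μ) (ht : 0 < t) (hl : 0 < l)
    (hs : t * expMoment ν 1 l + tiltWidth ν t l ≤ s) :
    3 / 4 * exp (-(3 / 2 * (t * Hfun ν l)) - 5) ≤ (μ t (Iic s)).toReal := by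
  refine (hμ.measure_Iic_ge ht hl (tiltWidth_pos hl)
    (four_mul_le_tiltWidth_sq hμ.levy ht.le hl) hs).trans' ?_
  exact mul_le_mul_of_nonneg_left
    (exp_le_exp.2 (by linarith [mul_tiltWidth_le hμ.levy ht.le hl])) (by norm_num)

lemma measure_Iic_ge_of_mul_expMoment_le (hμ : IsSubordinatorLaw ν μ) (ht : 0 < t) (hs : 0 < s)
    (ha : 0 < a) (has : t * expMoment ν 1 a ≤ s) :
    3 / 4 * exp (-(3 * (t * Hfun ν a)) - 20) ≤ (μ t (Iic s)).toReal := by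
  obtain ⟨b, hb, hbs, hHb⟩ := hμ.levy.exists_tiltWidth_le ht hs ha has
  refine (hμ.measure_Iic_ge_of_tiltWidth_le ht hb hbs).trans' ?_
  exact mul_le_mul_of_nonneg_left (exp_le_exp.2 (by linarith)) (by norm_num)

end IsSubordinatorLaw

namespace IsSigmaFun

variable {ν : Measure ℝ} {σ : ℝ → ℝ → ℝ} {t s : ℝ}

lemma nonneg (hσ : IsSigmaFun ν σ) (ht : 0 < t) (hs : 0 < s) : 0 ≤ σ t s := by
  by_cases h : ∃ l, 0 < l ∧ s / t < deriv (laplaceExp ν) l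
  · exact ((hσ t s ht hs).1 h).1.le
  · push Not at h
    exact ((hσ t s ht hs).2 h).ge

lemma mul_sub_mul_laplaceExp (hσ : IsSigmaFun ν σ) (ht : 0 < t) (hs : 0 < s) :
    σ t s * s - t * laplaceExp ν (σ t s) = -(t * Hfun ν (σ t s)) := by
  by_cases h : ∃ l, 0 < l ∧ s / t < deriv (laplaceExp ν) l
  · rw [Hfun, ((hσ t s ht hs).1 h).2]
    field_simp
    ring
  · push Not at h
    rw [(hσ t s ht hs).2 h, Hfun_zero, laplaceExp_zero]
    ring

lemma exists_pos_mul_expMoment_le (hσ : IsSigmaFun ν σ) (hν : IsLevyMeasure ν) (ht : 0 < t)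
    (hs : 0 < s) :
    ∃ a, 0 < a ∧ t * expMoment ν 1 a ≤ s ∧ t * Hfun ν a ≤ t * Hfun ν (σ t s) + 1 := by
  by_cases h : ∃ l, 0 < l ∧ s / t < deriv (laplaceExp ν) l
  · obtain ⟨hpos, hderiv⟩ := (hσ t s ht hs).1 h
    refine ⟨σ t s, hpos, ?_, by linarith⟩
    rw [← (hν.hasDerivAt_laplaceExp hpos).deriv, hderiv, mul_div_cancel₀ _ ht.ne']
  · push Not at h
    rw [(hσ t s ht hs).2 h, Hfun_zero, mul_zero, zero_add]
    obtain ⟨a, hsmall, ha⟩ := ((hν.tendsto_laplaceExp_zero.eventually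
      (gt_mem_nhds (inv_pos.2 ht))).and self_mem_nhdsWithin).exists
    refine ⟨a, ha, ?_, ?_⟩
    · have hPa := h a ha
      rwa [(hν.hasDerivAt_laplaceExp ha).deriv, le_div_iff₀' ht] at hPa
    · calc t * Hfun ν a ≤ t * laplaceExp ν a :=
            mul_le_mul_of_nonneg_left (hν.Hfun_le_laplaceExp ha) ht.le
        _ ≤ t * t⁻¹ := by gcongr
        _ = 1 := mul_inv_cancel₀ ht.ne'

end IsSigmaFun

/-- Proposition 2.3: two-sided estimate for the left tail of the subordinator:
`c₁ exp(-c₂ t H(σ(t,s))) ≤ P(S_t ≤ s) ≤ e · exp(-t H(σ(t,s)))` for all `t,s > 0`. -/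
theorem left_tail_estimate
    (ν : Measure ℝ) (μ : ℝ → Measure ℝ) (hsub : IsSubordinatorLaw ν μ)
    (σ : ℝ → ℝ → ℝ) (hσ : IsSigmaFun ν σ) :
    ∃ c₁ c₂ : ℝ, 0 < c₁ ∧ 0 < c₂ ∧
      ∀ t s : ℝ, 0 < t → 0 < s →
        c₁ * Real.exp (-(c₂ * (t * Hfun ν (σ t s)))) ≤ (μ t (Set.Iic s)).toReal ∧
        (μ t (Set.Iic s)).toReal ≤ Real.exp 1 * Real.exp (-(t * Hfun ν (σ t s))) := by
  refine ⟨3 / 4 * exp (-23), 3, by positivity, by norm_num, fun t s ht hs => ⟨?_, ?_⟩⟩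
  · obtain ⟨a, ha, has, hHa⟩ := hσ.exists_pos_mul_expMoment_le hsub.levy ht hs
    calc 3 / 4 * exp (-23) * exp (-(3 * (t * Hfun ν (σ t s))))
        = 3 / 4 * exp (-(3 * (t * Hfun ν (σ t s) + 1)) - 20) := by
          rw [mul_assoc, ← exp_add]
          ring_nf
      _ ≤ 3 / 4 * exp (-(3 * (t * Hfun ν a)) - 20) := by gcongr
      _ ≤ (μ t (Iic s)).toReal := hsub.measure_Iic_ge_of_mul_expMoment_le ht hs ha has
  · calc (μ t (Iic s)).toReal ≤ exp (σ t s * s - t * laplaceExp ν (σ t s)) :=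
          hsub.measure_Iic_le ht (hσ.nonneg ht hs) s
      _ = exp (-(t * Hfun ν (σ t s))) := by rw [hσ.mul_sub_mul_laplaceExp ht hs]
      _ ≤ exp 1 * exp (-(t * Hfun ν (σ t s))) :=
          le_mul_of_one_le_left (exp_pos _).le (one_le_exp zero_le_one)
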